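/- arXiv:1908.02098 — 3 statements merged into one kernel-verified Lean document; each statement's English description precedes it below -/
import Mathlib

section
/- If I_n(ε_1,…,ε_n) is a full cylinder and (ε'_1,…,ε'_m) is any admissible word, then |I_{n+m}(ε_1,…,ε_n,ε'_1,…,ε'_m)| = |I_n(ε_1,…,ε_n)| · |I_m(ε'_1,…,ε'_m)|. In particular, the concatenation of two full words is a full word. -/
open MeasureTheory Filter Real Set

noncomputable section

/-- The β-transformation `x ↦ βx mod 1`. -/
def bT (β x : ℝ) : ℝ := Int.fract (β * x)

/-- The digit `ε_{j+1}(x, β) = ⌊β T_β^j x⌋` (0-indexed). -/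
def dig (β x : ℝ) (j : ℕ) : ℤ := ⌊β * (bT β)^[j] x⌋

/-- A finite word is admissible if it is the initial digit string of some `x ∈ [0,1)`. -/
def Adm (β : ℝ) (w : List ℤ) : Prop :=
  ∃ x ∈ Set.Ico (0:ℝ) 1, ∀ i : Fin w.length, dig β x i = w.get i

/-- The set `Σ_β^n` of admissible words of length `n`. -/
def SigmaB (β : ℝ) (n : ℕ) : Set (List ℤ) := {w | w.length = n ∧ Adm β w}

/-- The cylinder of a word. -/
def cyl (β : ℝ) (w : List ℤ) : Set ℝ :=
  {x | x ∈ Set.Ico (0:ℝ) 1 ∧ ∀ i : Fin w.length, dig β x i = w.get i}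

/-- The length of a cylinder. -/
def cylLen (β : ℝ) (w : List ℤ) : ℝ := (volume (cyl β w)).toReal

/-- A word/cylinder is full if the cylinder has maximal length `β^{-n}`. -/
def IsFull (β : ℝ) (w : List ℤ) : Prop := cylLen β w = (β ^ w.length)⁻¹

/-- The left endpoint `Σ_j ε_j β^{-j}` of the cylinder of a word. -/
def leftpt (β : ℝ) (w : List ℤ) : ℝ :=
  ∑ i : Fin w.length, (w.get i : ℝ) / β ^ ((i : ℕ) + 1)

/-- Birkhoff (ergodic) sum `S_n f(x)`. -/
def birk (β : ℝ) (f : ℝ → ℝ) (n : ℕ) (x : ℝ) : ℝ :=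
  ∑ j ∈ Finset.range n, f ((bT β)^[j] x)

/-- The digit sequence of `1`. -/
def eps1 (β : ℝ) (j : ℕ) : ℤ := ⌊β * (bT β)^[j] 1⌋

/-- The infinite β-expansion of `1`. -/
def epsStar (β : ℝ) : ℕ → ℤ := by
  classical
  exact
  if h : ∃ m, eps1 β m ≠ 0 ∧ ∀ k, m < k → eps1 β k = 0 then
    fun j =>
      if j % (h.choose + 1) = h.choose then eps1 β h.choose - 1
      else eps1 β (j % (h.choose + 1))
  else eps1 β

/-- Strict lexicographic order on integer sequences. -/
def lexLt (a b : ℕ → ℤ) : Prop := ∃ k, (∀ j, j < k → a j = b j) ∧ a k < b k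

/-- The partition function `Σ_{w ∈ Σ_β^n} sup_{y ∈ I_n(w)} e^{S_n g(y)}`. -/
def presSum (β : ℝ) (g : ℝ → ℝ) (n : ℕ) : ℝ :=
  ∑' w : SigmaB β n, ⨆ y ∈ cyl β (w : List ℤ), Real.exp (birk β g n y)

/-- The pressure function `P(g, T_β)`. -/
def pressure (β : ℝ) (g : ℝ → ℝ) : ℝ :=
  limUnder Filter.atTop fun n : ℕ => Real.log (presSum β g n) / n

end

/-
On the cylinder of `u` (of length `n`), `T_β^n` is the affine map `x ↦ β^n (x - a)`, where `a`
is the left endpoint of the cylinder; hence `I(u ++ v)` is the part of `I(u)` mapped into `I(v)`.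
The cylinder `I(u)` always lies in the interval `[a, a + β^{-n})` that this map sends onto
`[0, 1)`, and it is full exactly when it fills that interval up to a null set. Then `I(u ++ v)`
is, up to a null set, the whole affine preimage of `I(v)`, whose length is `β^{-n} |I(v)|`.
-/

lemma mem_cyl_iff {β x : ℝ} {w : List ℤ} :
    x ∈ cyl β w ↔ x ∈ Ico (0 : ℝ) 1 ∧ ∀ k (hk : k < w.length), dig β x k = w[k] :=
  and_congr_right fun _ => ⟨fun h k hk => h ⟨k, hk⟩, fun h i => h i i.2⟩

lemma dig_iterate_bT (β x : ℝ) (n j : ℕ) : dig β ((bT β)^[n] x) j = dig β x (j + n) := by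
  simp only [dig, ← Function.iterate_add_apply]

lemma iterate_bT_mem_Ico {β x : ℝ} (hx : x ∈ Ico (0 : ℝ) 1) :
    ∀ n, (bT β)^[n] x ∈ Ico (0 : ℝ) 1
  | 0 => hx
  | n + 1 => by
    rw [Function.iterate_succ_apply']
    exact ⟨Int.fract_nonneg _, Int.fract_lt_one _⟩

lemma cyl_append (β : ℝ) (u v : List ℤ) :
    cyl β (u ++ v) = cyl β u ∩ (bT β)^[u.length] ⁻¹' cyl β v := by
  ext x
  simp only [mem_inter_iff, mem_preimage, mem_cyl_iff, List.length_append, dig_iterate_bT]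
  constructor
  · rintro ⟨hx, hdig⟩
    refine ⟨⟨hx, fun k hk => ?_⟩, iterate_bT_mem_Ico hx _, fun k hk => ?_⟩
    · simpa [List.getElem_append_left hk] using hdig k (by omega)
    · simpa [Nat.add_comm] using hdig (u.length + k) (by omega)
  · rintro ⟨⟨hx, hu⟩, -, hv⟩
    refine ⟨hx, fun k hk => ?_⟩
    by_cases hku : k < u.length
    · rw [List.getElem_append_left hku]
      exact hu k hku
    · rw [List.getElem_append_right (by omega)]
      simpa [Nat.sub_add_cancel (not_lt.1 hku)] using hv (k - u.length) (by omega)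

lemma bT_eq_of_dig_zero {β x : ℝ} {c : ℤ} (h : dig β x 0 = c) : bT β x = β * x - c := by
  rw [bT, Int.fract, show ⌊β * x⌋ = c from h]

lemma leftpt_cons (β : ℝ) (c : ℤ) (w : List ℤ) :
    leftpt β (c :: w) = (c + leftpt β w) / β := by
  simp only [leftpt, List.length_cons, Fin.sum_univ_succ, add_div, Finset.sum_div, div_div]
  simp [pow_succ]

lemma iterate_bT_eq_of_mem_cyl {β : ℝ} (hβ : β ≠ 0) :
    ∀ {w : List ℤ} {x : ℝ}, x ∈ cyl β w →
      (bT β)^[w.length] x = β ^ w.length * (x - leftpt β w)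
  | [], _, _ => by simp [leftpt]
  | c :: w, x, hx => by
    have hsplit : x ∈ cyl β [c] ∩ bT β ⁻¹' cyl β w := (cyl_append β [c] w).subset hx
    have hT : bT β x = β * x - c := bT_eq_of_dig_zero (hsplit.1.2 ⟨0, by simp⟩)
    rw [List.length_cons, Function.iterate_succ_apply, iterate_bT_eq_of_mem_cyl hβ hsplit.2, hT,
      leftpt_cons]
    field_simp
    ring

lemma cyl_subset_preimage_Ico {β : ℝ} (hβ : β ≠ 0) (w : List ℤ) :
    cyl β w ⊆ (fun x => β ^ w.length * (x - leftpt β w)) ⁻¹' Ico 0 1 := fun x hx => by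
  simpa only [mem_preimage, ← iterate_bT_eq_of_mem_cyl hβ hx] using iterate_bT_mem_Ico hx.1 _

lemma measurableSet_cyl (β : ℝ) (w : List ℤ) : MeasurableSet (cyl β w) := by
  have hdig : ∀ j, Measurable fun x => dig β x j := fun j =>
    ((measurable_fract.comp (measurable_id.const_mul β)).iterate j).const_mul β |>.floor
  have h : cyl β w = Ico 0 1 ∩ ⋂ i : Fin w.length, (fun x => dig β x i) ⁻¹' {w.get i} := by
    ext x
    simp [cyl, mem_iInter]
  rw [h]
  exact measurableSet_Ico.inter (.iInter fun i => hdig i (measurableSet_singleton _))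

lemma volume_cyl_lt_top (β : ℝ) (w : List ℤ) : volume (cyl β w) < ⊤ :=
  (measure_mono fun _ hx => hx.1).trans_lt (by simp [Real.volume_Ico])

lemma volume_preimage_mul_sub {c : ℝ} (hc : c ≠ 0) (a : ℝ) (s : Set ℝ) :
    volume ((fun x => c * (x - a)) ⁻¹' s) = ENNReal.ofReal |c⁻¹| * volume s := by
  have h : (fun x => c * (x - a)) ⁻¹' s = (c * ·) ⁻¹' ((· + -(c * a)) ⁻¹' s) := by
    ext x
    simp only [mem_preimage]
    rw [mul_sub, sub_eq_add_neg]
  rw [h, Real.volume_preimage_mul_left hc, measure_preimage_add_right]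

lemma cyl_ae_eq_preimage_Ico_of_isFull {β : ℝ} (hβ : 0 < β) {u : List ℤ} (hu : IsFull β u) :
    cyl β u =ᵐ[volume] (fun x => β ^ u.length * (x - leftpt β u)) ⁻¹' Ico 0 1 := by
  have hpow : β ^ u.length ≠ 0 := (pow_pos hβ _).ne'
  refine ae_eq_of_subset_of_measure_ge (cyl_subset_preimage_Ico hβ.ne' u) ?_
    (measurableSet_cyl β u).nullMeasurableSet (by simp [volume_preimage_mul_sub hpow])
  rw [volume_preimage_mul_sub hpow, Real.volume_Ico, ← ENNReal.ofReal_toReal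
    (volume_cyl_lt_top β u).ne, show (volume (cyl β u)).toReal = _ from hu,
    abs_of_pos (inv_pos.2 (pow_pos hβ _))]
  simp

lemma cylLen_append_of_isFull {β : ℝ} (hβ : 0 < β) {u : List ℤ} (hu : IsFull β u)
    (v : List ℤ) : cylLen β (u ++ v) = (β ^ u.length)⁻¹ * cylLen β v := by
  set A : ℝ → ℝ := fun x => β ^ u.length * (x - leftpt β u)
  have hpow : β ^ u.length ≠ 0 := (pow_pos hβ _).ne'
  have hcyl : cyl β (u ++ v) = cyl β u ∩ A ⁻¹' cyl β v := by
    rw [cyl_append, EqOn.inter_preimage_eq fun x hx => iterate_bT_eq_of_mem_cyl hβ.ne' hx]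
  have hae : (cyl β u ∩ A ⁻¹' cyl β v : Set ℝ) =ᵐ[volume]
      (A ⁻¹' Ico 0 1 ∩ A ⁻¹' cyl β v : Set ℝ) :=
    (cyl_ae_eq_preimage_Ico_of_isFull hβ hu).inter (.refl _ _)
  have hvol : volume (cyl β (u ++ v)) = volume (A ⁻¹' cyl β v) := by
    rw [hcyl, measure_congr hae, inter_eq_right.2 (preimage_mono fun _ hx => hx.1)]
  rw [cylLen, hvol, volume_preimage_mul_sub hpow, ENNReal.toReal_mul, ENNReal.toReal_ofReal
    (abs_nonneg _), abs_of_pos (inv_pos.2 (pow_pos hβ _)), cylLen]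

theorem stmt5_general (β : ℝ) (hβ : 1 < β) (u v : List ℤ)
    (hufull : IsFull β u) :
    cylLen β (u ++ v) = cylLen β u * cylLen β v ∧
      (IsFull β v → IsFull β (u ++ v)) := by
  have hlen := cylLen_append_of_isFull (zero_lt_one.trans hβ) hufull v
  refine ⟨hlen.trans (by rw [hufull]), fun hvfull => ?_⟩
  rw [IsFull, hlen, hvfull, List.length_append, pow_add, mul_inv]

theorem stmt5 (β : ℝ) (hβ : 1 < β) (u v : List ℤ) (hu : Adm β u)
    (hufull : IsFull β u) (hv : Adm β v) :
    cylLen β (u ++ v) = cylLen β u * cylLen β v ∧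
      (IsFull β v → IsFull β (u ++ v)) :=
  stmt5_general β hβ u v hufull
end

section
/- Fix 0 < ε < 1 and β > 1, and let n_0 be an integer such that 2n²β < β^{(n-1)ε} for all n ≥ n_0. Then for every interval J ⊆ [0,1] of length r with 0 < r < 2n_0 β^{-n_0}, there exists a full cylinder I_n contained in J satisfying r ≥ |I_n| > r^{1+ε}. -/
open MeasureTheory Filter Real Set

/-!
The intervals `[leftpt w, leftpt w + β^{-n})` of the words `w` of length `n` whose every suffix
`u` still satisfies `leftpt u + β^{-|u|} ≤ 1` are exactly cylinders, and these cylinders are full.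
Reading `x` digit by digit, with the digit `⌈βx⌉ - 1` and, if the remainder is too small,
borrowing one unit from that digit, produces such a word of length `n` whose interval ends in
`[x - nβ^{-n}, x]`. Hence any interval of length `r ≥ (n + 1)β^{-n}` contains a full cylinder of
order `n`. Taking `n` least with this property gives `r ≤ nβ^{-(n-1)}`, and the hypothesis on `n₀`
turns this (together with `r < 2n₀β^{-n₀}` when `n < n₀`) into `r^{1+ε} < β^{-n}`.
-/

open Topology

lemma exists_apply_succ_le_le_apply {α : Type*} [LinearOrder α] {f : ℕ → α} {r : α}
    (h : ∃ k, f (k + 1) ≤ r) (h0 : r ≤ f 0) : ∃ k, f (k + 1) ≤ r ∧ r ≤ f k := by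
  classical
  refine ⟨Nat.find h, Nat.find_spec h, ?_⟩
  rcases hk : Nat.find h with _ | k
  · exact h0
  · exact (not_le.mp (Nat.find_min h (hk ▸ k.lt_succ_self))).le

lemma tendsto_succ_mul_inv_pow_atTop {β : ℝ} (hβ : 1 < β) :
    Tendsto (fun k : ℕ => ((k : ℝ) + 1) * (β ^ k)⁻¹) atTop (𝓝 0) := by
  have h0 : 0 ≤ β⁻¹ := by positivity
  have h1 : β⁻¹ < 1 := inv_lt_one_of_one_lt₀ hβ
  simpa [add_mul, ← inv_pow] using
    (tendsto_self_mul_const_pow_of_lt_one h0 h1).add (tendsto_pow_atTop_nhds_zero_of_lt_one h0 h1)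

lemma exists_succ_mul_inv_pow_le_le {β r : ℝ} (hβ : 1 < β) (hr0 : 0 < r) (hr1 : r ≤ 1) :
    ∃ k : ℕ, (((k + 1 : ℕ) : ℝ) + 1) * (β ^ (k + 1))⁻¹ ≤ r ∧ r ≤ (k + 1) * (β ^ k)⁻¹ := by
  obtain ⟨N, hN⟩ :=
    ((tendsto_succ_mul_inv_pow_atTop hβ).eventually (gt_mem_nhds hr0)).exists_forall_of_atTop
  exact exists_apply_succ_le_le_apply (f := fun k : ℕ => ((k : ℝ) + 1) * (β ^ k)⁻¹)
    ⟨N, (hN (N + 1) (by omega)).le⟩ (by simpa using hr1)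

lemma rpow_one_add_lt_mul_mul_rpow {r s c u ε : ℝ} (hr : 0 < r) (hε : 0 < ε) (hε1 : ε ≤ 1)
    (hrs : r ≤ s) (hc : 1 ≤ c) (hu : 0 < u) (hrc : r < c * u) :
    r ^ (1 + ε) < s * c * u ^ ε := by
  have hcu : r ^ ε < c * u ^ ε :=
    calc r ^ ε < (c * u) ^ ε := Real.rpow_lt_rpow hr.le hrc hε
      _ = c ^ ε * u ^ ε := Real.mul_rpow (by linarith) hu.le
      _ ≤ c * u ^ ε := by
        gcongr
        simpa using Real.rpow_le_rpow_of_exponent_le hc hε1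
  calc r ^ (1 + ε) = r * r ^ ε := by rw [Real.rpow_add hr, Real.rpow_one]
    _ < s * (c * u ^ ε) := mul_lt_mul' hrs hcu (by positivity) (by linarith)
    _ = s * c * u ^ ε := by ring

lemma rpow_one_add_lt_inv_pow {β ε r c : ℝ} {k m : ℕ} (hβ : 1 < β) (hε0 : 0 < ε) (hε1 : ε ≤ 1)
    (hr : 0 < r) (hrk : r ≤ (k + 1) * (β ^ k)⁻¹) (hc : 1 ≤ c) (hrc : r < c * (β ^ m)⁻¹)
    (hkey : (k + 1) * c * β ≤ β ^ (m * ε)) :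
    r ^ (1 + ε) < (β ^ (k + 1))⁻¹ := by
  have hβ0 : 0 < β := by linarith
  have hB : 0 < β ^ ((m : ℝ) * ε) := by positivity
  calc r ^ (1 + ε) < (k + 1) * (β ^ k)⁻¹ * c * ((β ^ m)⁻¹) ^ ε :=
        rpow_one_add_lt_mul_mul_rpow hr hε0 hε1 hrk hc (by positivity) hrc
    _ = (k + 1) * c * β * (β ^ ((m : ℝ) * ε))⁻¹ * (β ^ (k + 1))⁻¹ := by
        rw [Real.inv_rpow (by positivity), ← Real.rpow_natCast_mul hβ0.le]
        field_simp
        ring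
    _ ≤ β ^ ((m : ℝ) * ε) * (β ^ ((m : ℝ) * ε))⁻¹ * (β ^ (k + 1))⁻¹ := by gcongr
    _ = (β ^ (k + 1))⁻¹ := by rw [mul_inv_cancel₀ hB.ne', one_mul]

lemma rpow_one_add_lt_inv_pow_succ {β ε r : ℝ} {n0 k : ℕ} (hβ : 1 < β) (hε0 : 0 < ε)
    (hε1 : ε ≤ 1) (hn0 : ∀ n : ℕ, n0 ≤ n → 2 * (n : ℝ) ^ 2 * β < β ^ (((n : ℝ) - 1) * ε))
    (hr : 0 < r) (hrn0 : r < 2 * n0 * (β ^ n0)⁻¹) (hrk : r ≤ (k + 1) * (β ^ k)⁻¹) :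
    r ^ (1 + ε) < (β ^ (k + 1))⁻¹ := by
  have hβk : 0 < (β ^ k)⁻¹ := by positivity
  rcases le_or_gt n0 (k + 1) with hkn | hkn
  · have hkey := hn0 (k + 1) hkn
    push_cast at hkey
    rw [add_sub_cancel_right] at hkey
    exact rpow_one_add_lt_inv_pow (c := 2 * (k + 1)) (m := k) hβ hε0 hε1 hr hrk
      (by linarith) (by nlinarith) (by nlinarith)
  · have hkn' : (k : ℝ) + 1 ≤ n0 := by exact_mod_cast hkn.le
    have hexp : β ^ (((n0 : ℝ) - 1) * ε) ≤ β ^ ((n0 : ℝ) * ε) :=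
      Real.rpow_le_rpow_of_exponent_le hβ.le (by nlinarith)
    have hkey : (k + 1) * (2 * n0) * β ≤ 2 * (n0 : ℝ) ^ 2 * β := by
      nlinarith [mul_le_mul_of_nonneg_right hkn' (by positivity : (0 : ℝ) ≤ 2 * n0 * β)]
    exact rpow_one_add_lt_inv_pow (c := 2 * n0) (m := n0) hβ hε0 hε1 hr hrk
      (by linarith) hrn0 (by linarith [hn0 n0 le_rfl])

namespace BetaExpansion

variable {β : ℝ}

noncomputable def rightpt (β : ℝ) (w : List ℤ) : ℝ := leftpt β w + (β ^ w.length)⁻¹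

/-- The interval `[leftpt β u, rightpt β u)` of every suffix `u` of the word lies in `[0, 1)`;
this is exactly what is needed for the cylinder of the word to be that whole interval. -/
def Fits (β : ℝ) : List ℤ → Prop
  | [] => True
  | d :: w => 0 ≤ d ∧ Fits β w ∧ d + rightpt β w ≤ β

@[simp] lemma leftpt_nil : leftpt β [] = 0 := by simp [leftpt]

lemma leftpt_cons (d : ℤ) (w : List ℤ) : leftpt β (d :: w) = (d + leftpt β w) / β := by
  simp only [leftpt, List.length_cons, Fin.sum_univ_succ, List.get_cons_zero,
    Fin.val_zero, Fin.val_succ, add_div, Finset.sum_div, div_div, pow_succ]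
  simp

@[simp] lemma rightpt_nil : rightpt β [] = 1 := by simp [rightpt]

lemma rightpt_cons (d : ℤ) (w : List ℤ) : rightpt β (d :: w) = (d + rightpt β w) / β := by
  simp only [rightpt, leftpt_cons, List.length_cons, pow_succ, mul_inv, div_eq_mul_inv]
  ring

lemma Fits.leftpt_nonneg (hβ : 0 < β) : ∀ {w : List ℤ}, Fits β w → 0 ≤ leftpt β w
  | [], _ => by simp
  | d :: _, ⟨hd, hw, _⟩ => by
    have hd0 : (0 : ℝ) ≤ d := by exact_mod_cast hd
    have hL := hw.leftpt_nonneg hβ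
    rw [leftpt_cons]
    positivity

lemma Fits.rightpt_le_one (hβ : 0 < β) : ∀ {w : List ℤ}, Fits β w → rightpt β w ≤ 1
  | [], _ => by simp
  | _ :: _, ⟨_, _, h⟩ => by rwa [rightpt_cons, div_le_one hβ]

lemma mem_cyl_cons {x : ℝ} {d : ℤ} {w : List ℤ} :
    x ∈ cyl β (d :: w) ↔ x ∈ Ico (0 : ℝ) 1 ∧ ⌊β * x⌋ = d ∧ bT β x ∈ cyl β w := by
  have hbT : bT β x ∈ Ico (0 : ℝ) 1 := ⟨Int.fract_nonneg _, Int.fract_lt_one _⟩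
  simp only [cyl, mem_ofPred_eq, List.length_cons, Fin.forall_fin_succ, dig, List.get_cons_zero,
    Fin.val_zero, Fin.val_succ, Function.iterate_zero_apply,
    Function.iterate_succ_apply, hbT, true_and]
  rfl

lemma Fits.cyl_eq_Ico (hβ : 0 < β) : ∀ {w : List ℤ}, Fits β w →
    cyl β w = Ico (leftpt β w) (rightpt β w)
  | [], _ => by ext x; simp [cyl]
  | d :: w, ⟨hd, hw, hdR⟩ => by
    have hd0 : (0 : ℝ) ≤ d := by exact_mod_cast hd
    have hL := hw.leftpt_nonneg hβ
    have hR := hw.rightpt_le_one hβ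
    ext x
    rw [mem_cyl_cons, hw.cyl_eq_Ico hβ, leftpt_cons, rightpt_cons, mem_Ico, mem_Ico, mem_Ico,
      div_le_iff₀' hβ, lt_div_iff₀' hβ]
    constructor
    · rintro ⟨-, hfloor, h1, h2⟩
      rw [bT, ← Int.self_sub_floor, hfloor] at h1 h2
      constructor <;> linarith
    · rintro ⟨h1, h2⟩
      have hfloor : ⌊β * x⌋ = d := by
        rw [Int.floor_eq_iff]; constructor <;> linarith
      refine ⟨⟨?_, ?_⟩, hfloor, ?_⟩
      · nlinarith
      · nlinarith
      · rw [bT, ← Int.self_sub_floor, hfloor]; constructor <;> linarith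

lemma Fits.adm_isFull (hβ : 0 < β) {w : List ℤ} (hw : Fits β w) : Adm β w ∧ IsFull β w := by
  have hlt : leftpt β w < rightpt β w := by
    rw [rightpt, lt_add_iff_pos_right]; positivity
  have hmem : leftpt β w ∈ cyl β w := by
    rw [hw.cyl_eq_Ico hβ]; exact ⟨le_rfl, hlt⟩
  refine ⟨⟨leftpt β w, hmem⟩, ?_⟩
  rw [IsFull, cylLen, hw.cyl_eq_Ico hβ, Real.volume_Ico, rightpt, add_sub_cancel_left,
      ENNReal.toReal_ofReal (by positivity)]

lemma exists_fits_rightpt_mem_Icc (hβ : 1 < β) (n : ℕ) {x : ℝ} (hx : (β ^ n)⁻¹ ≤ x)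
    (hx1 : x ≤ 1) :
    ∃ w, Fits β w ∧ w.length = n ∧ rightpt β w ∈ Icc (x - n * (β ^ n)⁻¹) x := by
  have hβ0 : 0 < β := by linarith
  induction n generalizing x with
  | zero =>
    refine ⟨[], trivial, rfl, ?_⟩
    simp only [pow_zero, inv_one] at hx
    simp [le_antisymm hx1 hx]
  | succ n ih =>
    set t := (β ^ n)⁻¹ with ht
    have ht0 : 0 < t := by positivity
    have hxt : t ≤ β * x := by
      rwa [pow_succ, mul_inv, ← ht, ← div_eq_mul_inv, div_le_iff₀ hβ0, mul_comm] at hx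
    have hsucc : x - ((n + 1 : ℕ) : ℝ) * (β ^ (n + 1))⁻¹ = (β * x - (n + 1) * t) / β := by
      rw [ht, pow_succ]; push_cast; field_simp
    set d := ⌈β * x⌉ - 1 with hd
    have hz0 : (0 : ℝ) < β * x - d := by
      rw [hd]; push_cast; linarith [Int.ceil_lt_add_one (β * x)]
    have hz1 : β * x - d ≤ 1 := by
      rw [hd]; push_cast; linarith [Int.le_ceil (β * x)]
    have hd0 : 0 ≤ d := by
      rw [hd, sub_nonneg, Int.one_le_ceil_iff]; linarith
    have hβx : β * x ≤ β := by nlinarith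
    by_cases hzt : t ≤ β * x - d
    · obtain ⟨w, hw, hlen, hR1, hR2⟩ := ih hzt hz1
      refine ⟨d :: w, ⟨hd0, hw, by linarith⟩, by simp [hlen], ?_⟩
      rw [rightpt_cons, hsucc, mem_Icc, div_le_div_iff_of_pos_right hβ0, div_le_iff₀' hβ0]
      constructor <;> nlinarith
    · -- the remainder is too small for order `n`: borrow one from `d`, fill up to `1`
      have hd1 : 1 ≤ d := by
        by_contra h
        have : d = 0 := by omega
        simp [this] at hzt; linarith
      obtain ⟨w, hw, hlen, hR1, hR2⟩ := ih (x := 1) (inv_le_one_of_one_le₀ (one_le_pow₀ hβ.le))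
        le_rfl
      refine ⟨(d - 1) :: w, ⟨by omega, hw, by push_cast; linarith⟩, by simp [hlen], ?_⟩
      rw [rightpt_cons, hsucc, mem_Icc, div_le_div_iff_of_pos_right hβ0, div_le_iff₀' hβ0]
      push_cast
      constructor <;> nlinarith

lemma exists_full_cyl_subset_Icc (hβ : 1 < β) {n : ℕ} {a r : ℝ}
    (hr : (n + 1) * (β ^ n)⁻¹ ≤ r) (hJ : Icc a (a + r) ⊆ Icc 0 1) :
    ∃ w, Adm β w ∧ IsFull β w ∧ cyl β w ⊆ Icc a (a + r) ∧ w.length = n := by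
  have hβ0 : 0 < β := by linarith
  have ht : 0 < (β ^ n)⁻¹ := by positivity
  have hr0 : 0 ≤ r := by nlinarith
  have ha : 0 ≤ a := (hJ ⟨le_rfl, by linarith⟩).1
  have har : a + r ≤ 1 := (hJ ⟨by linarith, le_rfl⟩).2
  obtain ⟨w, hw, rfl, hR1, hR2⟩ :=
    exists_fits_rightpt_mem_Icc hβ n (x := a + r) (by nlinarith) har
  refine ⟨w, (hw.adm_isFull hβ0).1, (hw.adm_isFull hβ0).2, ?_, rfl⟩
  rw [hw.cyl_eq_Ico hβ0]
  refine Ico_subset_Icc_self.trans (Icc_subset_Icc ?_ hR2)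
  rw [rightpt] at hR1
  linarith

end BetaExpansion

open BetaExpansion in
theorem stmt8 (β ε : ℝ) (hβ : 1 < β) (hε0 : 0 < ε) (hε1 : ε < 1) (n0 : ℕ)
    (hn0 : ∀ n : ℕ, n0 ≤ n → 2 * (n : ℝ) ^ 2 * β < β ^ (((n : ℝ) - 1) * ε))
    (a r : ℝ) (hr0 : 0 < r) (hrn0 : r < 2 * n0 * (β ^ n0)⁻¹)
    (hJ : Set.Icc a (a + r) ⊆ Set.Icc (0:ℝ) 1) :
    ∃ w : List ℤ, Adm β w ∧ IsFull β w ∧ cyl β w ⊆ Set.Icc a (a + r) ∧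
      (β ^ w.length)⁻¹ ≤ r ∧ r ^ (1 + ε) < (β ^ w.length)⁻¹ := by
  have hr1 : r ≤ 1 := by linarith [(hJ ⟨by linarith, le_rfl⟩).2, (hJ ⟨le_rfl, by linarith⟩).1]
  obtain ⟨k, hk, hrk⟩ := exists_succ_mul_inv_pow_le_le hβ hr0 hr1
  obtain ⟨w, hadm, hfull, hsub, hlen⟩ := exists_full_cyl_subset_Icc hβ hk hJ
  refine ⟨w, hadm, hfull, hsub, ?_, ?_⟩ <;> rw [hlen]
  · exact (le_mul_of_one_le_left (by positivity) (by push_cast; linarith)).trans hk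
  · exact rpow_one_add_lt_inv_pow_succ hβ hε0 hε1.le hn0 hr0 hrn0 hrk
end

section
/- A non-negative integer sequence (ε_1, ε_2, …) is admissible for the base β > 1 if and only if for every k ≥ 1, the shifted sequence (ε_k, ε_{k+1}, …) is lexicographically strictly smaller than the infinite β-expansion (ε*_1(β), ε*_2(β), …) of 1. -/
open MeasureTheory Filter Real Set

/-!
Write `S_n(a) = ∑_{j<n} a_j / β^(j+1)`. The infinite expansion `ε*` of `1` is characterised by
`0 < β^n (1 - S_n(ε*)) ≤ 1` for every `n`: these remainders are the orbit `T^n 1`, made periodic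
when the expansion of `1` terminates. For `x ∈ [0,1)` one has `S_n(ε(x)) ≤ x < 1`, so the digit
sequence of `x` can neither equal `ε*` nor exceed it lexicographically; as shifting the digits
of `x` is applying `T` to `x`, every shift is below `ε*`. Conversely, if every shift of `e` is
below `ε*`, a strong induction on `n` gives `S_n(e) < 1`, so all tails
`x_n = ∑_j e_(n+j) / β^(j+1)` lie in `[0,1)`; since `β x_n = e_n + x_(n+1)`, they form the
`T`-orbit of `x_0`, whose digits are therefore `e`.
-/

noncomputable def digitSum (β : ℝ) (a : ℕ → ℤ) (n : ℕ) : ℝ :=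
  ∑ j ∈ Finset.range n, (a j : ℝ) / β ^ (j + 1)

noncomputable def digitRem (β x : ℝ) (a : ℕ → ℤ) (n : ℕ) : ℝ :=
  β ^ n * (x - digitSum β a n)

noncomputable def digitVal (β : ℝ) (a : ℕ → ℤ) : ℝ := ∑' j, (a j : ℝ) / β ^ (j + 1)

section Digits

variable {β : ℝ} {a b : ℕ → ℤ}

lemma digitSum_succ (n : ℕ) :
    digitSum β a (n + 1) = digitSum β a n + a n / β ^ (n + 1) :=
  Finset.sum_range_succ _ _

lemma digitSum_congr {n : ℕ} (h : ∀ j < n, a j = b j) : digitSum β a n = digitSum β b n :=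
  Finset.sum_congr rfl fun j hj => by rw [h j (Finset.mem_range.mp hj)]

lemma digitSum_add (hβ : β ≠ 0) (p n : ℕ) :
    digitSum β a (p + n) = digitSum β a p + digitSum β (fun i => a (p + i)) n / β ^ p := by
  rw [digitSum, Finset.sum_range_add, digitSum, digitSum, Finset.sum_div]
  congr 1
  refine Finset.sum_congr rfl fun i _ => ?_
  rw [add_assoc, pow_add]
  field_simp

lemma digitRem_zero (x : ℝ) : digitRem β x a 0 = x := by
  simp [digitRem, digitSum]

lemma digitRem_succ (hβ : β ≠ 0) (x : ℝ) (n : ℕ) :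
    digitRem β x a (n + 1) = β * digitRem β x a n - a n := by
  rw [digitRem, digitRem, digitSum_succ, pow_succ]
  field_simp
  ring

lemma digitRem_periodic (hβ : β ≠ 0) {x : ℝ} {p : ℕ} (ha : Function.Periodic a p)
    (hp : digitRem β x a p = x) : Function.Periodic (digitRem β x a) p := by
  intro n
  induction n with
  | zero => rwa [zero_add, digitRem_zero]
  | succ n ih => rw [add_right_comm, digitRem_succ hβ, digitRem_succ hβ, ih, ha]

lemma digitSum_add_one_div_pow_le_of_lex (hβ : 0 < β) {k : ℕ} (hpre : ∀ j < k, a j = b j)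
    (hk : a k < b k) : digitSum β a (k + 1) + 1 / β ^ (k + 1) ≤ digitSum β b (k + 1) := by
  have hk' : (a k : ℝ) + 1 ≤ b k := by exact_mod_cast hk
  rw [digitSum_succ, digitSum_succ, digitSum_congr hpre, add_assoc, ← add_div]
  gcongr

end Digits

lemma nonpos_of_forall_pow_mul_le_one {β c : ℝ} (hβ : 1 < β)
    (h : ∀ n : ℕ, β ^ n * c ≤ 1) : c ≤ 0 := by
  by_contra! hc
  obtain ⟨n, hn⟩ := pow_unbounded_of_one_lt c⁻¹ hβ
  have := (inv_lt_iff_one_lt_mul₀ hc).mp hn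
  linarith [h n]

lemma exists_last_ne_zero {M : Type*} [Zero M] {f : ℕ → M} {n : ℕ} (h0 : f 0 ≠ 0)
    (h : ∀ k, n ≤ k → f k = 0) : ∃ m, f m ≠ 0 ∧ ∀ k, m < k → f k = 0 := by
  classical
  refine ⟨Nat.findGreatest (f · ≠ 0) n,
    Nat.findGreatest_spec (P := (f · ≠ 0)) (Nat.zero_le n) h0, fun k hk => ?_⟩
  by_cases hkn : k ≤ n
  · by_contra hne
    exact Nat.findGreatest_is_greatest hk hkn hne
  · exact h k (by omega)

section BetaTransformation

variable {β : ℝ}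

lemma bT_mem_Ico (x : ℝ) : bT β x ∈ Ico 0 1 :=
  ⟨Int.fract_nonneg _, Int.fract_lt_one _⟩

lemma bT_iterate_succ_mem_Ico (x : ℝ) (n : ℕ) : (bT β)^[n + 1] x ∈ Ico 0 1 := by
  rw [Function.iterate_succ_apply']
  exact bT_mem_Ico _

lemma bT_iterate_mem_Ico {x : ℝ} (hx : x ∈ Ico 0 1) (n : ℕ) : (bT β)^[n] x ∈ Ico 0 1 := by
  cases n with
  | zero => exact hx
  | succ n => exact bT_iterate_succ_mem_Ico x n

lemma bT_iterate_one_mem_Icc (n : ℕ) : (bT β)^[n] 1 ∈ Icc 0 1 := by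
  cases n with
  | zero => simp
  | succ n => exact Ico_subset_Icc_self (bT_iterate_succ_mem_Ico 1 n)

lemma dig_add (x : ℝ) (k j : ℕ) : dig β x (k + j) = dig β ((bT β)^[k] x) j := by
  rw [dig, dig, add_comm, Function.iterate_add_apply]

lemma dig_eq_zero_of_bT_iterate_eq_zero {x : ℝ} {n k : ℕ} (h : (bT β)^[n] x = 0)
    (hk : n ≤ k) : dig β x k = 0 := by
  obtain ⟨j, rfl⟩ := Nat.exists_eq_add_of_le hk
  rw [dig_add, h, dig, Function.iterate_fixed (by simp [bT])]
  simp

lemma digitRem_dig (hβ : β ≠ 0) (x : ℝ) (n : ℕ) :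
    digitRem β x (dig β x) n = (bT β)^[n] x := by
  induction n with
  | zero => exact digitRem_zero x
  | succ n ih =>
    rw [digitRem_succ hβ, ih, Function.iterate_succ_apply', bT, Int.fract, dig]

lemma digitSum_dig_le (hβ : 0 < β) {x : ℝ} (hx : 0 ≤ x) (n : ℕ) :
    digitSum β (dig β x) n ≤ x := by
  have h := digitRem_dig hβ.ne' x n
  have : 0 ≤ (bT β)^[n] x := by
    cases n with
    | zero => exact hx
    | succ n => exact (bT_iterate_succ_mem_Ico x n).1
  rw [digitRem] at h
  nlinarith [pow_pos hβ n]

lemma eq_zero_of_forall_dig_eq_zero (hβ : 1 < β) {x : ℝ} (hx : x ∈ Ico 0 1)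
    (h : ∀ n, dig β x n = 0) : x = 0 := by
  refine le_antisymm (nonpos_of_forall_pow_mul_le_one hβ fun n => ?_) hx.1
  have hrem := digitRem_dig (by positivity) x n
  rw [digitRem, digitSum_congr (b := 0) fun j _ => h j,
    show digitSum β 0 n = 0 by simp [digitSum], sub_zero] at hrem
  exact hrem ▸ (bT_iterate_mem_Ico hx n).2.le

lemma dig_eq_of_orbit {v : ℕ → ℝ} {a : ℕ → ℤ} (hv : ∀ n, v n ∈ Ico 0 1)
    (hrec : ∀ n, β * v n = a n + v (n + 1)) (n : ℕ) : dig β (v 0) n = a n := by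
  have hiter : ∀ n, (bT β)^[n] (v 0) = v n := by
    intro n
    induction n with
    | zero => rfl
    | succ n ih =>
      rw [Function.iterate_succ_apply', ih, bT, hrec, Int.fract_intCast_add,
        Int.fract_eq_self.mpr (hv (n + 1))]
  rw [dig, hiter, hrec, Int.floor_intCast_add, Int.floor_eq_zero_iff.mpr (hv (n + 1)),
    add_zero]

end BetaTransformation

section ExpansionOfOne

variable {β : ℝ} {m : ℕ}

lemma eps1_zero_ne_zero (hβ : 1 < β) : eps1 β 0 ≠ 0 := by
  have : (1 : ℤ) ≤ eps1 β 0 := by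
    rw [eps1, Function.iterate_zero_apply, mul_one, Int.le_floor]
    exact_mod_cast hβ.le
  omega

lemma epsStar_of_not_exists_last
    (h : ¬ ∃ m, eps1 β m ≠ 0 ∧ ∀ k, m < k → eps1 β k = 0) : epsStar β = eps1 β := by
  unfold epsStar
  rw [dif_neg h]

lemma epsStar_of_last (hm : eps1 β m ≠ 0) (hlast : ∀ k, m < k → eps1 β k = 0) :
    epsStar β = fun j => if j % (m + 1) = m then eps1 β m - 1 else eps1 β (j % (m + 1)) := by
  have h : ∃ m, eps1 β m ≠ 0 ∧ ∀ k, m < k → eps1 β k = 0 := ⟨m, hm, hlast⟩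
  have hchoose : h.choose = m := by
    obtain ⟨h1, h2⟩ := h.choose_spec
    rcases lt_trichotomy h.choose m with hlt | heq | hgt
    · exact absurd (h2 m hlt) hm
    · exact heq
    · exact absurd (hlast _ hgt) h1
  unfold epsStar
  simp only [dif_pos h, hchoose]

lemma bT_iterate_one_mem_Ioc (hm : eps1 β m ≠ 0) {n : ℕ} (hn : n ≤ m) :
    (bT β)^[n] 1 ∈ Ioc 0 1 :=
  ⟨(bT_iterate_one_mem_Icc n).1.lt_of_ne' fun h =>
    hm (dig_eq_zero_of_bT_iterate_eq_zero h hn), (bT_iterate_one_mem_Icc n).2⟩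

lemma bT_iterate_one_succ_eq_zero (hβ : 1 < β) (hlast : ∀ k, m < k → eps1 β k = 0) :
    (bT β)^[m + 1] 1 = 0 :=
  eq_zero_of_forall_dig_eq_zero hβ (bT_iterate_succ_mem_Ico 1 m) fun j => by
    rw [← dig_add]
    exact hlast _ (by omega)

lemma digitRem_epsStar_of_last (hβ : 1 < β) (hm : eps1 β m ≠ 0)
    (hlast : ∀ k, m < k → eps1 β k = 0) (n : ℕ) :
    digitRem β 1 (epsStar β) n = (bT β)^[n % (m + 1)] 1 := by
  have hβ0 : β ≠ 0 := by positivity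
  have hE := epsStar_of_last hm hlast
  have hlow : ∀ n ≤ m, digitRem β 1 (epsStar β) n = (bT β)^[n] 1 := by
    intro n hn
    rw [digitRem, digitSum_congr (b := dig β 1) fun j hj => ?_, ← digitRem, digitRem_dig hβ0]
    rw [hE]
    simp [Nat.mod_eq_of_lt (show j < m + 1 by omega), show j ≠ m by omega, eps1, dig]
  have hper : Function.Periodic (epsStar β) (m + 1) := fun j => by
    rw [hE]
    simp only [Nat.add_mod_right]
  -- lowering the last digit by one raises the remainder `T^(m+1) 1 = 0` to `1`,
  -- the remainder at `0`
  have hone : digitRem β 1 (epsStar β) (m + 1) = 1 := by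
    have h0 := bT_iterate_one_succ_eq_zero hβ hlast
    rw [Function.iterate_succ_apply', bT, Int.fract] at h0
    rw [digitRem_succ hβ0, hlow m le_rfl, hE]
    simp only [Nat.mod_eq_of_lt m.lt_succ_self, if_true, eps1, Int.cast_sub, Int.cast_one]
    linarith
  rw [← (digitRem_periodic hβ0 hper hone).map_mod_nat n,
    hlow _ (Nat.lt_succ_iff.mp (Nat.mod_lt _ m.succ_pos))]

lemma digitRem_epsStar_mem_Ioc (hβ : 1 < β) (n : ℕ) :
    digitRem β 1 (epsStar β) n ∈ Ioc 0 1 := by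
  by_cases h : ∃ m, eps1 β m ≠ 0 ∧ ∀ k, m < k → eps1 β k = 0
  · obtain ⟨m, hm, hlast⟩ := h
    rw [digitRem_epsStar_of_last hβ hm hlast]
    exact bT_iterate_one_mem_Ioc hm (Nat.lt_succ_iff.mp (Nat.mod_lt _ m.succ_pos))
  · rw [epsStar_of_not_exists_last h, show eps1 β = dig β 1 from rfl,
      digitRem_dig (by positivity)]
    refine ⟨(bT_iterate_one_mem_Icc n).1.lt_of_ne' fun h0 => h ?_,
      (bT_iterate_one_mem_Icc n).2⟩
    exact exists_last_ne_zero (eps1_zero_ne_zero hβ) fun k hk =>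
      dig_eq_zero_of_bT_iterate_eq_zero h0 hk

lemma digitSum_epsStar_lt_one (hβ : 1 < β) (n : ℕ) : digitSum β (epsStar β) n < 1 := by
  have h := (digitRem_epsStar_mem_Ioc hβ n).1
  rw [digitRem] at h
  linarith [pos_of_mul_pos_right h (by positivity : (0 : ℝ) ≤ β ^ n)]

lemma one_le_digitSum_epsStar_add (hβ : 1 < β) (n : ℕ) :
    1 ≤ digitSum β (epsStar β) n + 1 / β ^ n := by
  have h := (digitRem_epsStar_mem_Ioc hβ n).2
  rw [digitRem, mul_comm, ← le_div_iff₀ (by positivity)] at h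
  linarith

end ExpansionOfOne

lemma lexLt_trichotomy (a b : ℕ → ℤ) : lexLt a b ∨ a = b ∨ lexLt b a :=
  lt_trichotomy (toLex a) (toLex b)

section Parry

variable {β : ℝ}

lemma lexLt_dig_epsStar (hβ : 1 < β) {y : ℝ} (hy : y ∈ Ico 0 1) :
    lexLt (dig β y) (epsStar β) := by
  have hβ0 : 0 < β := zero_lt_one.trans hβ
  rcases lexLt_trichotomy (dig β y) (epsStar β) with hlt | heq | ⟨k, hpre, hk⟩
  · exact hlt
  · have : 1 - y ≤ 0 := nonpos_of_forall_pow_mul_le_one hβ fun n => by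
      have h1 := (digitRem_epsStar_mem_Ioc hβ n).2
      have h2 := digitSum_dig_le hβ0 hy.1 n
      rw [heq] at h2
      rw [digitRem] at h1
      nlinarith [pow_pos hβ0 n]
    linarith [hy.2]
  · have h1 := digitSum_add_one_div_pow_le_of_lex hβ0 hpre hk
    have h2 := one_le_digitSum_epsStar_add hβ (k + 1)
    have h3 := digitSum_dig_le hβ0 hy.1 (k + 1)
    linarith [hy.2]

lemma digitSum_succ_add_div_lt_one (hβ : 1 < β) {a : ℕ → ℤ} {k : ℕ}
    (hpre : ∀ j < k, a j = epsStar β j) (hk : a k < epsStar β k) {t : ℝ} (ht : t ≤ 1) :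
    digitSum β a (k + 1) + t / β ^ (k + 1) < 1 := by
  have h1 := digitSum_add_one_div_pow_le_of_lex (zero_lt_one.trans hβ) hpre hk
  have h2 := digitSum_epsStar_lt_one hβ (k + 1)
  have h3 : t / β ^ (k + 1) ≤ 1 / β ^ (k + 1) := by gcongr
  linarith

lemma digitSum_lt_one_of_forall_lexLt (hβ : 1 < β) {a : ℕ → ℤ}
    (ha : ∀ k, lexLt (fun j => a (k + j)) (epsStar β)) (n : ℕ) : digitSum β a n < 1 := by
  induction n using Nat.strong_induction_on generalizing a with
  | _ n ih =>
  obtain ⟨k, hpre, hk⟩ : lexLt a (epsStar β) := by simpa only [zero_add] using ha 0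
  rcases le_or_gt n k with hnk | hkn
  · rw [digitSum_congr fun j hj => hpre j (by omega)]
    exact digitSum_epsStar_lt_one hβ n
  · obtain ⟨i, rfl⟩ := Nat.exists_eq_add_of_lt hkn
    rw [add_right_comm, digitSum_add (by positivity)]
    refine digitSum_succ_add_div_lt_one hβ hpre hk (ih i (by omega) fun r => ?_).le
    simpa only [add_assoc] using ha (k + 1 + r)

lemma summable_of_forall_lexLt (hβ : 1 < β) {a : ℕ → ℤ} (ha0 : ∀ n, 0 ≤ a n)
    (ha : ∀ k, lexLt (fun j => a (k + j)) (epsStar β)) :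
    Summable fun j => (a j : ℝ) / β ^ (j + 1) :=
  summable_of_sum_range_le (fun j => div_nonneg (by exact_mod_cast ha0 j) (by positivity))
    fun n => (digitSum_lt_one_of_forall_lexLt hβ ha n).le

lemma digitVal_eq_digitSum_add (hβ : β ≠ 0) {a : ℕ → ℤ}
    (hs : Summable fun j => (a j : ℝ) / β ^ (j + 1)) (n : ℕ) :
    digitVal β a = digitSum β a n + digitVal β (fun i => a (n + i)) / β ^ n := by
  rw [digitVal, ← hs.sum_add_tsum_nat_add n, digitVal, ← tsum_div_const]
  congr 1
  refine tsum_congr fun i => ?_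
  rw [add_comm i n, add_assoc, pow_add]
  field_simp

lemma mul_digitVal_eq_add (hβ : β ≠ 0) {a : ℕ → ℤ}
    (hs : Summable fun j => (a j : ℝ) / β ^ (j + 1)) :
    β * digitVal β a = a 0 + digitVal β (fun j => a (1 + j)) := by
  rw [digitVal_eq_digitSum_add hβ hs 1, digitSum, Finset.sum_range_one, zero_add, pow_one]
  field_simp

lemma digitVal_mem_Ico_of_forall_lexLt (hβ : 1 < β) {a : ℕ → ℤ} (ha0 : ∀ n, 0 ≤ a n)
    (ha : ∀ k, lexLt (fun j => a (k + j)) (epsStar β)) : digitVal β a ∈ Ico 0 1 := by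
  refine ⟨tsum_nonneg fun j => div_nonneg (by exact_mod_cast ha0 j) (by positivity), ?_⟩
  obtain ⟨k, hpre, hk⟩ : lexLt a (epsStar β) := by simpa only [zero_add] using ha 0
  rw [digitVal_eq_digitSum_add (by positivity) (summable_of_forall_lexLt hβ ha0 ha) (k + 1)]
  refine digitSum_succ_add_div_lt_one hβ hpre hk ?_
  refine Real.tsum_le_of_sum_range_le (fun j => ?_) fun n => ?_
  · exact div_nonneg (by exact_mod_cast ha0 _) (by positivity)
  · refine (digitSum_lt_one_of_forall_lexLt hβ (fun r => ?_) n).le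
    simpa only [add_assoc] using ha (k + 1 + r)

end Parry

theorem stmt9 (β : ℝ) (hβ : 1 < β) (e : ℕ → ℤ) (he : ∀ n, 0 ≤ e n) :
    (∃ x ∈ Set.Ico (0:ℝ) 1, ∀ n, dig β x n = e n) ↔
      ∀ k : ℕ, lexLt (fun j => e (k + j)) (epsStar β) := by
  constructor
  · rintro ⟨x, hx, hdig⟩ k
    have hshift : (fun j => e (k + j)) = dig β ((bT β)^[k] x) :=
      funext fun j => by rw [← hdig, dig_add]
    exact hshift ▸ lexLt_dig_epsStar hβ (bT_iterate_mem_Ico hx k)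
  · intro hlex
    have hshift : ∀ n k, lexLt (fun j => e (n + (k + j))) (epsStar β) := fun n k => by
      simpa only [add_assoc] using hlex (n + k)
    set v : ℕ → ℝ := fun n => digitVal β (fun j => e (n + j))
    have hv : ∀ n, v n ∈ Ico 0 1 := fun n =>
      digitVal_mem_Ico_of_forall_lexLt hβ (fun j => he _) (hshift n)
    have hrec : ∀ n, β * v n = e n + v (n + 1) := fun n => by
      simpa only [v, add_zero, add_assoc] using mul_digitVal_eq_add (by positivity)
        (summable_of_forall_lexLt hβ (fun j => he _) (hshift n))
    exact ⟨v 0, hv 0, dig_eq_of_orbit hv hrec⟩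
end
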